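/- Let n ≥ 1, θ > 0, L ∈ ℝ, and 0 ≤ ε < θ/√n. Let (λ_i)_{i∈I} be a family of real numbers with λ_i ≥ L for all i, and (α_i)_{i∈I} a family of vectors in ℝⁿ such that for each k ∈ {1,…,n} there exist indices i_k⁺, i_k⁻ ∈ I with |α_{i_k⁺} − θe_k| ≤ ε and |α_{i_k⁻} + θe_k| ≤ ε, where e_1,…,e_n is the standard basis of ℝⁿ. Then for every ξ ∈ ℝⁿ, sup_{i∈I} (λ_i + ⟨α_i, ξ⟩) ≥ L + (θ/√n − ε)·|ξ|, where |·| is the Euclidean norm. -/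
import Mathlib


open scoped RealInnerProductSpace

/-- Quantitative coercivity estimate: if the weight vectors α_i come ε-close to
±θe_k for every coordinate direction k, and λ_i ≥ L, then for every ξ,
sup_i (λ_i + ⟨α_i, ξ⟩) ≥ L + (θ/√n − ε)·|ξ|. -/
theorem sup_affine_ge_of_near_scaled_basis
    {n : ℕ} (hn : 1 ≤ n) {θ : ℝ} (hθ : 0 < θ) (L : ℝ) {ε : ℝ}
    (hε0 : 0 ≤ ε) (hε : ε < θ / Real.sqrt n)
    {I : Type*} (lam : I → ℝ) (hlam : ∀ i, L ≤ lam i)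
    (α : I → EuclideanSpace ℝ (Fin n))
    (hα : ∀ k : Fin n, ∃ ip im : I,
      ‖α ip - θ • EuclideanSpace.single k (1 : ℝ)‖ ≤ ε ∧
      ‖α im + θ • EuclideanSpace.single k (1 : ℝ)‖ ≤ ε) :
    ∀ ξ : EuclideanSpace ℝ (Fin n),
      ((L + (θ / Real.sqrt n - ε) * ‖ξ‖ : ℝ) : EReal) ≤
        ⨆ i, ((lam i + ⟪α i, ξ⟫ : ℝ) : EReal) := by
  intro ξ
  have hns : (0:ℝ) < Real.sqrt n := Real.sqrt_pos.2 (by exact_mod_cast hn)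
  -- pick k maximizing |ξ k|
  haveI : NeZero n := ⟨by omega⟩
  obtain ⟨k, -, hk⟩ := Finset.exists_max_image Finset.univ (fun j => |ξ j|) ⟨0, Finset.mem_univ 0⟩
  -- ‖ξ‖ ≤ √n * |ξ k|
  have hnorm : ‖ξ‖ ≤ Real.sqrt n * |ξ k| := by
    rw [EuclideanSpace.norm_eq]
    simp only [Real.norm_eq_abs, sq_abs]
    have : ∑ j, ξ j ^ 2 ≤ (n : ℝ) * (ξ k)^2 := by
      calc ∑ j, ξ j ^ 2 ≤ ∑ _j : Fin n, (ξ k)^2 := by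
            apply Finset.sum_le_sum
            intro j _
            have := hk j (Finset.mem_univ j)
            nlinarith [abs_nonneg (ξ j), abs_nonneg (ξ k), sq_abs (ξ j), sq_abs (ξ k)]
        _ = (n : ℝ) * (ξ k)^2 := by simp [Finset.sum_const, mul_comm]
    calc Real.sqrt (∑ j, ξ j ^ 2) ≤ Real.sqrt ((n:ℝ) * (ξ k)^2) := Real.sqrt_le_sqrt this
      _ = Real.sqrt n * |ξ k| := by
          rw [Real.sqrt_mul (by positivity), Real.sqrt_sq_eq_abs]
  obtain ⟨ip, im, hip, him⟩ := hα k
  -- choose i and sign s such that ‖α i - s • θ e_k‖ ≤ ε and s * ξ k = |ξ k|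
  obtain ⟨i, s, hi, hs⟩ :
      ∃ (i : I) (s : ℝ), ‖α i - (s * θ) • EuclideanSpace.single k (1:ℝ)‖ ≤ ε ∧ s * ξ k = |ξ k| := by
    rcases le_or_gt 0 (ξ k) with h | h
    · exact ⟨ip, 1, by simpa using hip, by simp [abs_of_nonneg h]⟩
    · refine ⟨im, -1, ?_, by simp [abs_of_neg h]⟩
      have : α im - ((-1 : ℝ) * θ) • EuclideanSpace.single k (1:ℝ)
          = α im + θ • EuclideanSpace.single k (1:ℝ) := by
        simp [sub_eq_add_neg, neg_smul]
      rw [this]; exact him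
  -- inner product bound
  have hinner : θ * |ξ k| - ε * ‖ξ‖ ≤ ⟪α i, ξ⟫ := by
    have h1 : ⟪α i, ξ⟫ = ⟪α i - (s * θ) • EuclideanSpace.single k (1:ℝ), ξ⟫
        + (s * θ) * ⟪EuclideanSpace.single k (1:ℝ), ξ⟫ := by
      rw [inner_sub_left, real_inner_smul_left]; ring
    have h2 : ⟪EuclideanSpace.single k (1:ℝ), ξ⟫ = ξ k := by
      simp [EuclideanSpace.inner_single_left]
    have h3 : |⟪α i - (s * θ) • EuclideanSpace.single k (1:ℝ), ξ⟫| ≤ ε * ‖ξ‖ := by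
      calc _ ≤ ‖α i - (s * θ) • EuclideanSpace.single k (1:ℝ)‖ * ‖ξ‖ :=
            abs_real_inner_le_norm _ _
        _ ≤ ε * ‖ξ‖ := by gcongr
    have h4 : (s * θ) * ξ k = θ * |ξ k| := by rw [mul_assoc, mul_comm θ (ξ k), ← mul_assoc, hs]; ring
    rw [h1, h2, h4]
    have := abs_le.1 h3
    linarith [this.1]
  have key : L + (θ / Real.sqrt n - ε) * ‖ξ‖ ≤ lam i + ⟪α i, ξ⟫ := by
    have h5 : θ / Real.sqrt n * ‖ξ‖ ≤ θ * |ξ k| := by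
      rw [div_mul_eq_mul_div, div_le_iff₀ hns]
      calc θ * ‖ξ‖ ≤ θ * (Real.sqrt n * |ξ k|) := by gcongr
        _ = θ * |ξ k| * Real.sqrt n := by ring
    have := hlam i
    nlinarith
  calc ((L + (θ / Real.sqrt n - ε) * ‖ξ‖ : ℝ) : EReal)
      ≤ ((lam i + ⟪α i, ξ⟫ : ℝ) : EReal) := by exact_mod_cast key
    _ ≤ ⨆ i, ((lam i + ⟪α i, ξ⟫ : ℝ) : EReal) := le_iSup (fun j => ((lam j + ⟪α j, ξ⟫ : ℝ) : EReal)) i
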